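/- Let 0 ≤ θ < π/2 and let A be an n×n complex matrix in the sector class S_θ. Then ω(ℜA) ≤ ω(A) ≤ secθ · ω(ℜA), where ω denotes the numerical radius. -/

import Mathlib

open Matrix
open scoped ComplexOrder

/-- The real part `(A + Aᴴ)/2` of a complex matrix. -/
noncomputable def matRe {n : ℕ} (A : Matrix (Fin n) (Fin n) ℂ) : Matrix (Fin n) (Fin n) ℂ :=
  (2⁻¹ : ℂ) • (A + Aᴴ)

/-- The imaginary part `(A - Aᴴ)/(2i)` of a complex matrix. -/
noncomputable def matIm {n : ℕ} (A : Matrix (Fin n) (Fin n) ℂ) : Matrix (Fin n) (Fin n) ℂ :=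
  (2 * Complex.I)⁻¹ • (A - Aᴴ)

/-- Loewner order: `Y - X` is positive semidefinite. -/
def loewnerLE {n : ℕ} (X Y : Matrix (Fin n) (Fin n) ℂ) : Prop := (Y - X).PosSemidef

/-- `A` lies in the sector class `S_θ`: its real part is positive definite and for all `x`,
`|⟨(ℑA)x, x⟩| ≤ tan θ · ⟨(ℜA)x, x⟩`. -/
def sectorClass {n : ℕ} (θ : ℝ) (A : Matrix (Fin n) (Fin n) ℂ) : Prop :=
  (matRe A).PosDef ∧
    ∀ x : Fin n → ℂ,
      |(star x ⬝ᵥ (matIm A).mulVec x).re| ≤ Real.tan θ * (star x ⬝ᵥ (matRe A).mulVec x).re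

/-- The `v`-weighted arithmetic mean `A ∇_v B = v A + (1 - v) B`. -/
noncomputable def amean {n : ℕ} (v : ℝ) (A B : Matrix (Fin n) (Fin n) ℂ) :
    Matrix (Fin n) (Fin n) ℂ :=
  (v : ℂ) • A + ((1 - v : ℝ) : ℂ) • B

/-- The `v`-weighted harmonic mean `A !_v B = (v A⁻¹ + (1 - v) B⁻¹)⁻¹`. -/
noncomputable def hmean {n : ℕ} (v : ℝ) (A B : Matrix (Fin n) (Fin n) ℂ) :
    Matrix (Fin n) (Fin n) ℂ :=
  ((v : ℂ) • A⁻¹ + ((1 - v : ℝ) : ℂ) • B⁻¹)⁻¹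

/-- A linear map on matrices is positive and unital. -/
def IsPosUnitalMap {n : ℕ}
    (Φ : Matrix (Fin n) (Fin n) ℂ →ₗ[ℂ] Matrix (Fin n) (Fin n) ℂ) : Prop :=
  Φ 1 = 1 ∧ ∀ X : Matrix (Fin n) (Fin n) ℂ, X.PosSemidef → (Φ X).PosSemidef

/-- The numerical radius `ω(A) = sup { |⟨Ax, x⟩| : ‖x‖ = 1 }` (ℓ² norm). -/
noncomputable def numRadius {n : ℕ} (A : Matrix (Fin n) (Fin n) ℂ) : ℝ :=
  sSup {r : ℝ | ∃ x : EuclideanSpace ℂ (Fin n), ‖x‖ = 1 ∧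
    r = ‖star (x : Fin n → ℂ) ⬝ᵥ A.mulVec (x : Fin n → ℂ)‖}

/-- The spectral norm (ℓ² → ℓ² operator norm) of a matrix. -/
noncomputable def matSpectralNorm {n : ℕ} (A : Matrix (Fin n) (Fin n) ℂ) : ℝ :=
  ‖Matrix.toEuclideanCLM (𝕜 := ℂ) A‖

/-!
For a unit vector `x` put `q = ⟨Ax, x⟩`. Then `⟨(ℜA)x, x⟩ = Re q` and `⟨(ℑA)x, x⟩ = Im q`, so
`ω(ℜA) ≤ ω(A)` is just `|Re q| ≤ |q|`. The sector condition `|Im q| ≤ tan θ · Re q` confines `q`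
to the sector of half-angle `θ` around the positive real axis, where `|q| ≤ sec θ · Re q`.
-/

namespace Matrix

variable {n : Type*} [Fintype n]

lemma star_dotProduct_conjTranspose_mulVec (A : Matrix n n ℂ) (x : n → ℂ) :
    star x ⬝ᵥ Aᴴ *ᵥ x = star (star x ⬝ᵥ A *ᵥ x) := by
  rw [← star_dotProduct, star_mulVec, dotProduct_mulVec]

end Matrix

lemma star_dotProduct_matRe_mulVec {n : ℕ} (A : Matrix (Fin n) (Fin n) ℂ) (x : Fin n → ℂ) :
    star x ⬝ᵥ matRe A *ᵥ x = ((star x ⬝ᵥ A *ᵥ x).re : ℂ) := by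
  rw [matRe, smul_mulVec, add_mulVec, dotProduct_smul, dotProduct_add,
    star_dotProduct_conjTranspose_mulVec, Complex.re_eq_add_conj, smul_eq_mul, div_eq_inv_mul]
  rfl

lemma star_dotProduct_matIm_mulVec {n : ℕ} (A : Matrix (Fin n) (Fin n) ℂ) (x : Fin n → ℂ) :
    star x ⬝ᵥ matIm A *ᵥ x = ((star x ⬝ᵥ A *ᵥ x).im : ℂ) := by
  rw [matIm, smul_mulVec, sub_mulVec, dotProduct_smul, dotProduct_sub,
    star_dotProduct_conjTranspose_mulVec, Complex.im_eq_sub_conj, smul_eq_mul, div_eq_inv_mul]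
  rfl

lemma Complex.norm_le_inv_cos_mul_re {z : ℂ} {θ : ℝ} (hcos : 0 < Real.cos θ) (hre : 0 ≤ z.re)
    (him : |z.im| ≤ Real.tan θ * z.re) : ‖z‖ ≤ (Real.cos θ)⁻¹ * z.re := by
  have hsec : (Real.cos θ)⁻¹ ^ 2 = 1 + Real.tan θ ^ 2 := by
    rw [inv_pow, ← Real.inv_one_add_tan_sq hcos.ne', inv_inv]
  have him_sq : z.im ^ 2 ≤ (Real.tan θ * z.re) ^ 2 := by
    rw [← sq_abs]; exact pow_le_pow_left₀ (abs_nonneg _) him 2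
  refine (pow_le_pow_iff_left₀ (norm_nonneg z) (by positivity) two_ne_zero).1 ?_
  rw [Complex.sq_norm, Complex.normSq_apply, mul_pow, hsec]
  nlinarith

lemma star_dotProduct_mulVec_eq_inner {n : ℕ} (A : Matrix (Fin n) (Fin n) ℂ)
    (x : EuclideanSpace ℂ (Fin n)) :
    star (x : Fin n → ℂ) ⬝ᵥ A *ᵥ (x : Fin n → ℂ) = inner ℂ x (toEuclideanCLM (𝕜 := ℂ) A x) := by
  rw [EuclideanSpace.inner_eq_star_dotProduct, dotProduct_comm]
  rfl

lemma bddAbove_numRange_norm {n : ℕ} (A : Matrix (Fin n) (Fin n) ℂ) :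
    BddAbove {r : ℝ | ∃ x : EuclideanSpace ℂ (Fin n), ‖x‖ = 1 ∧
      r = ‖star (x : Fin n → ℂ) ⬝ᵥ A *ᵥ (x : Fin n → ℂ)‖} := by
  refine ⟨‖toEuclideanCLM (𝕜 := ℂ) A‖, ?_⟩
  rintro r ⟨x, hx, rfl⟩
  rw [star_dotProduct_mulVec_eq_inner]
  calc ‖inner ℂ x (toEuclideanCLM (𝕜 := ℂ) A x)‖
      ≤ ‖x‖ * (‖toEuclideanCLM (𝕜 := ℂ) A‖ * ‖x‖) :=
        (norm_inner_le_norm _ _).trans (by gcongr; exact (toEuclideanCLM (𝕜 := ℂ) A).le_opNorm x)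
    _ = ‖toEuclideanCLM (𝕜 := ℂ) A‖ := by rw [hx, one_mul, mul_one]

lemma norm_le_numRadius {n : ℕ} (A : Matrix (Fin n) (Fin n) ℂ) {x : EuclideanSpace ℂ (Fin n)}
    (hx : ‖x‖ = 1) : ‖star (x : Fin n → ℂ) ⬝ᵥ A *ᵥ (x : Fin n → ℂ)‖ ≤ numRadius A :=
  le_csSup (bddAbove_numRange_norm A) ⟨x, hx, rfl⟩

lemma numRadius_nonneg {n : ℕ} (A : Matrix (Fin n) (Fin n) ℂ) : 0 ≤ numRadius A :=
  Real.sSup_nonneg (by rintro r ⟨x, -, rfl⟩; positivity)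

lemma numRadius_le_mul_of_forall {n : ℕ} {A B : Matrix (Fin n) (Fin n) ℂ} {c : ℝ} (hc : 0 ≤ c)
    (h : ∀ x : EuclideanSpace ℂ (Fin n), ‖x‖ = 1 →
      ‖star (x : Fin n → ℂ) ⬝ᵥ B *ᵥ (x : Fin n → ℂ)‖
        ≤ c * ‖star (x : Fin n → ℂ) ⬝ᵥ A *ᵥ (x : Fin n → ℂ)‖) :
    numRadius B ≤ c * numRadius A := by
  refine Real.sSup_le ?_ (mul_nonneg hc (numRadius_nonneg A))
  rintro r ⟨x, hx, rfl⟩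
  exact (h x hx).trans (mul_le_mul_of_nonneg_left (norm_le_numRadius A hx) hc)

lemma norm_star_dotProduct_matRe_mulVec {n : ℕ} (A : Matrix (Fin n) (Fin n) ℂ) (x : Fin n → ℂ) :
    ‖star x ⬝ᵥ matRe A *ᵥ x‖ = |(star x ⬝ᵥ A *ᵥ x).re| := by
  rw [star_dotProduct_matRe_mulVec, Complex.norm_real, Real.norm_eq_abs]

lemma numRadius_matRe_le {n : ℕ} (A : Matrix (Fin n) (Fin n) ℂ) :
    numRadius (matRe A) ≤ numRadius A := by
  simpa using numRadius_le_mul_of_forall zero_le_one fun x _ ↦ by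
    rw [norm_star_dotProduct_matRe_mulVec, one_mul]
    exact Complex.abs_re_le_norm _

theorem stmt19 {n : ℕ} (θ : ℝ) (hθ0 : 0 ≤ θ) (hθ1 : θ < Real.pi / 2)
    (A : Matrix (Fin n) (Fin n) ℂ) (hA : sectorClass θ A) :
    numRadius (matRe A) ≤ numRadius A ∧
      numRadius A ≤ (Real.cos θ)⁻¹ * numRadius (matRe A) := by
  have hcos : 0 < Real.cos θ := Real.cos_pos_of_mem_Ioo ⟨by linarith [Real.pi_pos], hθ1⟩
  refine ⟨numRadius_matRe_le A, numRadius_le_mul_of_forall (by positivity) fun x _ ↦ ?_⟩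
  have hre : 0 ≤ (star (x : Fin n → ℂ) ⬝ᵥ A *ᵥ (x : Fin n → ℂ)).re := by
    simpa [star_dotProduct_matRe_mulVec] using hA.1.posSemidef.re_dotProduct_nonneg (x : Fin n → ℂ)
  have him := hA.2 x
  rw [star_dotProduct_matRe_mulVec, star_dotProduct_matIm_mulVec] at him
  rw [norm_star_dotProduct_matRe_mulVec, abs_of_nonneg hre]
  exact Complex.norm_le_inv_cos_mul_re hcos hre him
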